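/- Let M, N ≥ 1 with M even. If N ≡ 1 (mod 3), then the alternating number of independent sets of the cylindric rectangle 𝓡ᶜ(M,N) is zero: Zᶜ_𝓡(M,N) = 0. -/

import Mathlib

/-- Two vertices of the grid `ℤ²` are adjacent iff they are at distance 1. -/
def GridAdj (p q : ℤ × ℤ) : Prop := |p.1 - q.1| + |p.2 - q.2| = 1

instance : DecidableRel GridAdj := fun p q => by unfold GridAdj; infer_instance

/-- The tilted rectangle `𝓡(M,N)`: points `(x,y)` with `y ≤ x ≤ y+M-1` and
`-y ≤ x ≤ -y+N-1` (cut out of a bounding box that contains all such points). -/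
noncomputable def rectR (M N : ℕ) : Finset (ℤ × ℤ) :=
  ((Finset.Icc (-(M + N : ℤ)) (M + N)) ×ˢ (Finset.Icc (-(M + N : ℤ)) (M + N))).filter
    (fun p => p.2 ≤ p.1 ∧ p.1 ≤ p.2 + M - 1 ∧ -p.2 ≤ p.1 ∧ p.1 ≤ -p.2 + N - 1)

/-- Adjacency in the cylindric rectangle `𝓡ᶜ(M,N)` (for `M` even).  Its vertex set is
that of `𝓡(M,N)` (the vertices of `𝓡(M+1,N)` with `x-y = M` being identified with the
diagonal `x-y = 0`, each vertex `(i,i)` representing the class `{(i,i), (M/2+i, -M/2+i)}`).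
Two classes are adjacent iff some representatives are adjacent in `ℤ²`. -/
def cylAdj (M : ℕ) (p q : ℤ × ℤ) : Prop :=
  GridAdj p q
    ∨ (p.1 = p.2 ∧ GridAdj (p.1 + (M : ℤ) / 2, p.2 - (M : ℤ) / 2) q)
    ∨ (q.1 = q.2 ∧ GridAdj p (q.1 + (M : ℤ) / 2, q.2 - (M : ℤ) / 2))

instance (M : ℕ) : DecidableRel (cylAdj M) := fun p q => by unfold cylAdj; infer_instance

/-- The alternating number `Zᶜ_𝓡(M,N)` of independent sets of the cylindric
rectangle `𝓡ᶜ(M,N)`. -/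
noncomputable def altZc (M N : ℕ) : ℤ :=
  ∑ I ∈ (rectR M N).powerset.filter (fun I => ∀ p ∈ I, ∀ q ∈ I, ¬ cylAdj M p q),
    (-1 : ℤ) ^ I.card

/-! ### Auxiliary lemmas about the adjacency relations -/

lemma gridAdj_iff (p q : ℤ × ℤ) : GridAdj p q ↔
    ((p.1 = q.1 ∧ (p.2 = q.2 + 1 ∨ q.2 = p.2 + 1)) ∨
     (p.2 = q.2 ∧ (p.1 = q.1 + 1 ∨ q.1 = p.1 + 1))) := by
  unfold GridAdj
  rcases abs_cases (p.1 - q.1) with ⟨h1, h1'⟩ | ⟨h1, h1'⟩ <;>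
    rcases abs_cases (p.2 - q.2) with ⟨h2, h2'⟩ | ⟨h2, h2'⟩ <;>
      rw [h1, h2] <;> omega

lemma gridAdj_uv (p q : ℤ × ℤ) : GridAdj p q ↔
    ((p.1 + p.2 = q.1 + q.2 + 1 ∨ q.1 + q.2 = p.1 + p.2 + 1) ∧
     (p.1 - p.2 = q.1 - q.2 + 1 ∨ q.1 - q.2 = p.1 - p.2 + 1)) := by
  rw [gridAdj_iff]; omega

lemma cylAdj_uv {M : ℕ} (hM2 : (M : ℤ) % 2 = 0) (p q : ℤ × ℤ) :
    cylAdj M p q ↔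
    ((p.1 + p.2 = q.1 + q.2 + 1 ∨ q.1 + q.2 = p.1 + p.2 + 1) ∧
     (p.1 - p.2 = q.1 - q.2 + 1 ∨ q.1 - q.2 = p.1 - p.2 + 1
      ∨ (p.1 = p.2 ∧ (q.1 - q.2 = (M : ℤ) - 1 ∨ q.1 - q.2 = (M : ℤ) + 1))
      ∨ (q.1 = q.2 ∧ (p.1 - p.2 = (M : ℤ) - 1 ∨ p.1 - p.2 = (M : ℤ) + 1)))) := by
  unfold cylAdj
  simp only [gridAdj_uv]
  omega

lemma gridAdj_symm {p q : ℤ × ℤ} (h : GridAdj p q) : GridAdj q p := by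
  unfold GridAdj at h ⊢
  rw [abs_sub_comm q.1 p.1, abs_sub_comm q.2 p.2]
  exact h

lemma cylAdj_symm {M : ℕ} {p q : ℤ × ℤ} (h : cylAdj M p q) : cylAdj M q p := by
  rcases h with h | ⟨h1, h2⟩ | ⟨h1, h2⟩
  · exact Or.inl (gridAdj_symm h)
  · exact Or.inr (Or.inr ⟨h1, gridAdj_symm h2⟩)
  · exact Or.inr (Or.inl ⟨h1, gridAdj_symm h2⟩)

lemma gridAdj_level {p q : ℤ × ℤ} (h : GridAdj p q) :
    p.1 + p.2 = q.1 + q.2 + 1 ∨ q.1 + q.2 = p.1 + p.2 + 1 := by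
  unfold GridAdj at h
  rcases abs_cases (p.1 - q.1) with ⟨h1, h1'⟩ | ⟨h1, h1'⟩ <;>
    rcases abs_cases (p.2 - q.2) with ⟨h2, h2'⟩ | ⟨h2, h2'⟩ <;> omega

lemma cylAdj_level {M : ℕ} {p q : ℤ × ℤ} (h : cylAdj M p q) :
    p.1 + p.2 = q.1 + q.2 + 1 ∨ q.1 + q.2 = p.1 + p.2 + 1 := by
  rcases h with h | ⟨h1, h2⟩ | ⟨h1, h2⟩
  · exact gridAdj_level h
  · have := gridAdj_level h2; simp only at this; omega
  · have := gridAdj_level h2; simp only at this; omega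

lemma mem_rectR {M N : ℕ} {p : ℤ × ℤ} : p ∈ rectR M N ↔
    (p.2 ≤ p.1 ∧ p.1 ≤ p.2 + M - 1 ∧ -p.2 ≤ p.1 ∧ p.1 ≤ -p.2 + N - 1) := by
  unfold rectR
  simp only [Finset.mem_filter, Finset.mem_product, Finset.mem_Icc]
  constructor
  · rintro ⟨-, h⟩; exact h
  · intro h; refine ⟨⟨⟨?_, ?_⟩, ?_, ?_⟩, h⟩ <;> omega

/-! ### Sum splitting over powersets -/

lemma sum_powerset_union_disjoint {α : Type*} [DecidableEq α] {s t : Finset α}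
    (hd : Disjoint s t) (f : Finset α → ℤ) :
    ∑ I ∈ (s ∪ t).powerset, f I =
      ∑ a ∈ s.powerset, ∑ b ∈ t.powerset, f (a ∪ b) := by
  have key : ∀ x : Finset α × Finset α, x.1 ⊆ s → x.2 ⊆ t →
      ((x.1 ∪ x.2) ∩ s = x.1 ∧ (x.1 ∪ x.2) ∩ t = x.2) := by
    intro x h1 h2
    constructor <;> ext y <;> simp only [Finset.mem_inter, Finset.mem_union] <;> constructor
    · rintro ⟨hy | hy, hys⟩
      · exact hy
      · exact absurd (Finset.disjoint_left.mp hd hys) (fun h => h (h2 hy))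
    · intro hy; exact ⟨Or.inl hy, h1 hy⟩
    · rintro ⟨hy | hy, hyt⟩
      · exact absurd (Finset.disjoint_left.mp hd (h1 hy)) (fun h => h hyt)
      · exact hy
    · intro hy; exact ⟨Or.inr hy, h2 hy⟩
  rw [← Finset.sum_product']
  refine Finset.sum_nbij' (fun I => (I ∩ s, I ∩ t)) (fun x => x.1 ∪ x.2) ?_ ?_ ?_ ?_ ?_
  · intro I hI
    simp only [Finset.mem_product, Finset.mem_powerset]
    exact ⟨Finset.inter_subset_right, Finset.inter_subset_right⟩
  · intro x hx
    simp only [Finset.mem_product, Finset.mem_powerset] at hx ⊢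
    exact Finset.union_subset (hx.1.trans Finset.subset_union_left)
      (hx.2.trans Finset.subset_union_right)
  · intro I hI
    simp only [Finset.mem_powerset] at hI
    show I ∩ s ∪ I ∩ t = I
    rw [← Finset.inter_union_distrib_left]
    exact Finset.inter_eq_left.mpr hI
  · intro x hx
    simp only [Finset.mem_product, Finset.mem_powerset] at hx
    obtain ⟨h1, h2⟩ := key x hx.1 hx.2
    show ((x.1 ∪ x.2) ∩ s, (x.1 ∪ x.2) ∩ t) = x
    rw [h1, h2]
  · intro I hI
    simp only [Finset.mem_powerset] at hI
    show f I = f (I ∩ s ∪ I ∩ t)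
    rw [← Finset.inter_union_distrib_left, Finset.inter_eq_left.mpr hI]

/-! ### The shift map identifying levels ≥ 3 of `𝓡ᶜ(M,N+3)` with `𝓡ᶜ(M,N)` -/

def phiW (M : ℕ) (p : ℤ × ℤ) : ℤ × ℤ :=
  if p.1 - p.2 = (M : ℤ) - 1 then (p.1 - 1 - (M : ℤ) / 2, p.2 - 2 + (M : ℤ) / 2)
  else (p.1 - 1, p.2 - 2)

def psiW (M : ℕ) (q : ℤ × ℤ) : ℤ × ℤ :=
  if q.1 = q.2 then (q.1 + 1 + (M : ℤ) / 2, q.2 + 2 - (M : ℤ) / 2)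
  else (q.1 + 1, q.2 + 2)

lemma phiW_spec {M N : ℕ} (hM2 : (M : ℤ) % 2 = 0) (hM : 2 ≤ M) {p : ℤ × ℤ}
    (hp : p ∈ rectR M (N + 3)) (h3 : 3 ≤ p.1 + p.2) :
    phiW M p ∈ rectR M N ∧ psiW M (phiW M p) = p := by
  rw [mem_rectR] at hp
  unfold phiW psiW
  split_ifs with h1 h2 h2 <;>
    refine ⟨mem_rectR.mpr ?_, ?_⟩ <;> simp only [Prod.ext_iff] <;>
      push_cast at * <;> omega

lemma psiW_spec {M N : ℕ} (hM2 : (M : ℤ) % 2 = 0) (hM : 2 ≤ M) {q : ℤ × ℤ}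
    (hq : q ∈ rectR M N) :
    psiW M q ∈ rectR M (N + 3) ∧ 3 ≤ (psiW M q).1 + (psiW M q).2 ∧
      phiW M (psiW M q) = q := by
  rw [mem_rectR] at hq
  unfold psiW phiW
  split_ifs with h1 h2 h2 <;>
    refine ⟨mem_rectR.mpr ?_, ?_, ?_⟩ <;> simp only [Prod.ext_iff] <;>
      push_cast at * <;> omega

lemma phiW_adj {M : ℕ} (hM2 : (M : ℤ) % 2 = 0) (hM : 2 ≤ M) {p q : ℤ × ℤ}
    (hp1 : p.2 ≤ p.1) (hp2 : p.1 ≤ p.2 + M - 1)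
    (hq1 : q.2 ≤ q.1) (hq2 : q.1 ≤ q.2 + M - 1) :
    cylAdj M (phiW M p) (phiW M q) ↔ cylAdj M p q := by
  rw [cylAdj_uv hM2, cylAdj_uv hM2]
  unfold phiW
  split_ifs with h1 h2 h2 <;> simp only <;> push_cast at * <;> omega

/-! ### Level pieces of the cylinder -/

section Pieces

variable (M N : ℕ)

def Ind (I : Finset (ℤ × ℤ)) : Prop := ∀ p ∈ I, ∀ q ∈ I, ¬ cylAdj M p q

instance : DecidablePred (Ind M) := fun I => by unfold Ind; infer_instance

noncomputable def V0 : Finset (ℤ × ℤ) := (rectR M (N + 3)).filter (fun p => p.1 + p.2 = 0)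
noncomputable def V1 : Finset (ℤ × ℤ) := (rectR M (N + 3)).filter (fun p => p.1 + p.2 = 1)
noncomputable def V2 : Finset (ℤ × ℤ) := (rectR M (N + 3)).filter (fun p => p.1 + p.2 = 2)
noncomputable def WW : Finset (ℤ × ℤ) := (rectR M (N + 3)).filter (fun p => 3 ≤ p.1 + p.2)

noncomputable def free0 (B : Finset (ℤ × ℤ)) : Finset (ℤ × ℤ) :=
  (V0 M N).filter (fun v => ∀ b ∈ B, ¬ cylAdj M v b)

lemma partitionV : rectR M (N + 3) = V1 M N ∪ (V0 M N ∪ (V2 M N ∪ WW M N)) := by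
  ext p
  simp only [V0, V1, V2, WW, Finset.mem_union, Finset.mem_filter]
  constructor
  · intro hp
    have h0 : 0 ≤ p.1 + p.2 := by have := mem_rectR.mp hp; omega
    rcases (by omega :
        p.1 + p.2 = 1 ∨ p.1 + p.2 = 0 ∨ p.1 + p.2 = 2 ∨ 3 ≤ p.1 + p.2) with h | h | h | h
    · exact Or.inl ⟨hp, h⟩
    · exact Or.inr (Or.inl ⟨hp, h⟩)
    · exact Or.inr (Or.inr (Or.inl ⟨hp, h⟩))
    · exact Or.inr (Or.inr (Or.inr ⟨hp, h⟩))
  · rintro (⟨h, -⟩ | ⟨h, -⟩ | ⟨h, -⟩ | ⟨h, -⟩) <;> exact h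

lemma lv_of_mem {A B C J : Finset (ℤ × ℤ)}
    (hA : A ⊆ V0 M N) (hB : B ⊆ V1 M N) (hC : C ⊆ V2 M N) (hJ : J ⊆ WW M N)
    {r : ℤ × ℤ} (hr : r ∈ B ∪ (A ∪ (C ∪ J))) :
    (r.1 + r.2 = 1 ∧ r ∈ B) ∨ (r.1 + r.2 = 0 ∧ r ∈ A) ∨
    (r.1 + r.2 = 2 ∧ r ∈ C) ∨ (3 ≤ r.1 + r.2 ∧ r ∈ J) := by
  simp only [Finset.mem_union] at hr
  rcases hr with h | h | h | h
  · exact Or.inl ⟨(Finset.mem_filter.mp (hB h)).2, h⟩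
  · exact Or.inr (Or.inl ⟨(Finset.mem_filter.mp (hA h)).2, h⟩)
  · exact Or.inr (Or.inr (Or.inl ⟨(Finset.mem_filter.mp (hC h)).2, h⟩))
  · exact Or.inr (Or.inr (Or.inr ⟨(Finset.mem_filter.mp (hJ h)).2, h⟩))

lemma ind_decomp {A B C J : Finset (ℤ × ℤ)}
    (hA : A ⊆ V0 M N) (hB : B ⊆ V1 M N) (hC : C ⊆ V2 M N) (hJ : J ⊆ WW M N) :
    Ind M (B ∪ (A ∪ (C ∪ J))) ↔
      ((∀ a ∈ A, ∀ b ∈ B, ¬ cylAdj M a b) ∧ (∀ b ∈ B, ∀ c ∈ C, ¬ cylAdj M b c) ∧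
       (∀ c ∈ C, ∀ j ∈ J, ¬ cylAdj M c j) ∧ Ind M J) := by
  constructor
  · intro h
    refine ⟨?_, ?_, ?_, ?_⟩
    · intro a ha b hb
      exact h a (by simp [Finset.mem_union, ha]) b (by simp [Finset.mem_union, hb])
    · intro b hb c hc
      exact h b (by simp [Finset.mem_union, hb]) c (by simp [Finset.mem_union, hc])
    · intro c hc j hj
      exact h c (by simp [Finset.mem_union, hc]) j (by simp [Finset.mem_union, hj])
    · intro x hx y hy
      exact h x (by simp [Finset.mem_union, hx]) y (by simp [Finset.mem_union, hy])
  · rintro ⟨h1, h2, h3, h4⟩ p hp q hq hadj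
    have hl := cylAdj_level hadj
    rcases lv_of_mem M N hA hB hC hJ hp with ⟨e1, m1⟩ | ⟨e1, m1⟩ | ⟨e1, m1⟩ | ⟨e1, m1⟩ <;>
      rcases lv_of_mem M N hA hB hC hJ hq with ⟨e2, m2⟩ | ⟨e2, m2⟩ | ⟨e2, m2⟩ | ⟨e2, m2⟩ <;>
        first
          | omega
          | exact h1 p m1 q m2 hadj
          | exact h1 q m2 p m1 (cylAdj_symm hadj)
          | exact h2 p m1 q m2 hadj
          | exact h2 q m2 p m1 (cylAdj_symm hadj)
          | exact h3 p m1 q m2 hadj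
          | exact h3 q m2 p m1 (cylAdj_symm hadj)
          | exact h4 p m1 q m2 hadj
          | exact h4 q m2 p m1 (cylAdj_symm hadj)

lemma card_decomp {A B C J : Finset (ℤ × ℤ)}
    (hA : A ⊆ V0 M N) (hB : B ⊆ V1 M N) (hC : C ⊆ V2 M N) (hJ : J ⊆ WW M N) :
    (B ∪ (A ∪ (C ∪ J))).card = B.card + (A.card + (C.card + J.card)) := by
  have lv := fun {X : Finset (ℤ×ℤ)} (hX : X ⊆ (rectR M (N+3)).filter (fun p => p.1+p.2 = 0))
      => hX
  have h1 : Disjoint C J := Finset.disjoint_left.mpr (fun r h h' => by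
    have := (Finset.mem_filter.mp (hC h)).2
    have := (Finset.mem_filter.mp (hJ h')).2
    omega)
  have h2 : Disjoint A (C ∪ J) := Finset.disjoint_left.mpr (fun r h h' => by
    have := (Finset.mem_filter.mp (hA h)).2
    rcases Finset.mem_union.mp h' with h' | h'
    · have := (Finset.mem_filter.mp (hC h')).2; omega
    · have := (Finset.mem_filter.mp (hJ h')).2; omega)
  have h3 : Disjoint B (A ∪ (C ∪ J)) := Finset.disjoint_left.mpr (fun r h h' => by
    have := (Finset.mem_filter.mp (hB h)).2
    rcases Finset.mem_union.mp h' with h' | h'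
    · have := (Finset.mem_filter.mp (hA h')).2; omega
    rcases Finset.mem_union.mp h' with h' | h'
    · have := (Finset.mem_filter.mp (hC h')).2; omega
    · have := (Finset.mem_filter.mp (hJ h')).2; omega)
  rw [Finset.card_union_of_disjoint h3, Finset.card_union_of_disjoint h2,
    Finset.card_union_of_disjoint h1]

/-- domination transfer: if every level-0 vertex has a neighbour in `B ⊆ V1`,
then so does every level-2 vertex. -/
lemma dom_transfer (hM2 : (M : ℤ) % 2 = 0) (hM : 2 ≤ M) {B : Finset (ℤ × ℤ)}
    (hB : B ⊆ V1 M N) (hfree : free0 M N B = ∅) {c : ℤ × ℤ} (hc : c ∈ V2 M N) :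
    ∃ b ∈ B, cylAdj M b c := by
  obtain ⟨hcV, hc2⟩ := Finset.mem_filter.mp hc
  rw [mem_rectR] at hcV
  have hc0 : ((c.1 - 1, c.2 - 1) : ℤ × ℤ) ∈ V0 M N := by
    rw [V0, Finset.mem_filter, mem_rectR]
    refine ⟨⟨?_, ?_, ?_, ?_⟩, ?_⟩ <;> simp only <;> push_cast at * <;> omega
  have := Finset.eq_empty_iff_forall_notMem.mp hfree (c.1 - 1, c.2 - 1)
  rw [free0, Finset.mem_filter] at this
  push_neg at this
  obtain ⟨b, hbB, hadj⟩ := this hc0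
  refine ⟨b, hbB, cylAdj_symm ?_⟩
  -- transfer adjacency from (c.1-1, c.2-1) to c
  have hbV := Finset.mem_filter.mp (hB hbB)
  have hbr := mem_rectR.mp hbV.1
  rw [cylAdj_uv hM2] at hadj ⊢
  simp only at hadj
  push_cast at *
  omega

end Pieces

/-! ### The transfer recursion -/

lemma ZW_eq (M N : ℕ) (hM2 : (M : ℤ) % 2 = 0) (hM : 2 ≤ M) :
    ∑ J ∈ (WW M N).powerset, (if Ind M J then (-1 : ℤ) ^ J.card else 0) = altZc M N := by
  rw [← Finset.sum_filter]
  unfold altZc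
  have memW : ∀ {p : ℤ × ℤ}, p ∈ WW M N → p ∈ rectR M (N + 3) ∧ 3 ≤ p.1 + p.2 := by
    intro p hp; exact Finset.mem_filter.mp hp
  refine Finset.sum_nbij' (fun J => J.image (phiW M)) (fun I => I.image (psiW M))
    ?_ ?_ ?_ ?_ ?_
  · -- maps into target
    intro J hJ
    simp only [Finset.mem_filter, Finset.mem_powerset] at hJ ⊢
    obtain ⟨hJW, hind⟩ := hJ
    constructor
    · intro x hx
      obtain ⟨a, ha, rfl⟩ := Finset.mem_image.mp hx
      obtain ⟨h1, h2⟩ := memW (hJW ha)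
      exact (phiW_spec hM2 hM h1 h2).1
    · intro x hx y hy hadj
      obtain ⟨a, ha, rfl⟩ := Finset.mem_image.mp hx
      obtain ⟨b, hb, rfl⟩ := Finset.mem_image.mp hy
      obtain ⟨ha1, ha2⟩ := memW (hJW ha)
      obtain ⟨hb1, hb2⟩ := memW (hJW hb)
      have hra := mem_rectR.mp ha1
      have hrb := mem_rectR.mp hb1
      exact hind a ha b hb ((phiW_adj hM2 hM hra.1 hra.2.1 hrb.1 hrb.2.1).mp hadj)
  · -- inverse maps into source
    intro I hI
    simp only [Finset.mem_filter, Finset.mem_powerset] at hI ⊢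
    obtain ⟨hIR, hind⟩ := hI
    constructor
    · intro x hx
      obtain ⟨a, ha, rfl⟩ := Finset.mem_image.mp hx
      obtain ⟨h1, h2, h3⟩ := psiW_spec (N := N) hM2 hM (hIR ha)
      exact Finset.mem_filter.mpr ⟨h1, h2⟩
    · intro x hx y hy hadj
      obtain ⟨a, ha, rfl⟩ := Finset.mem_image.mp hx
      obtain ⟨b, hb, rfl⟩ := Finset.mem_image.mp hy
      obtain ⟨ha1, ha2, ha3⟩ := psiW_spec (N := N) hM2 hM (hIR ha)
      obtain ⟨hb1, hb2, hb3⟩ := psiW_spec (N := N) hM2 hM (hIR hb)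
      have hra := mem_rectR.mp ha1
      have hrb := mem_rectR.mp hb1
      have := (phiW_adj hM2 hM hra.1 hra.2.1 hrb.1 hrb.2.1).mpr hadj
      rw [ha3, hb3] at this
      exact hind a ha b hb this
  · -- left inverse
    intro J hJ
    simp only [Finset.mem_filter, Finset.mem_powerset] at hJ
    show (J.image (phiW M)).image (psiW M) = J
    rw [Finset.image_image]
    refine Finset.image_congr (fun x hx => ?_) |>.trans (Finset.image_id)
    obtain ⟨h1, h2⟩ := memW (hJ.1 hx)
    exact (phiW_spec hM2 hM h1 h2).2
  · -- right inverse
    intro I hI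
    simp only [Finset.mem_filter, Finset.mem_powerset] at hI
    show (I.image (psiW M)).image (phiW M) = I
    rw [Finset.image_image]
    refine Finset.image_congr (fun x hx => ?_) |>.trans (Finset.image_id)
    exact (psiW_spec (N := N) hM2 hM (hI.1 hx)).2.2
  · -- summand
    intro J hJ
    simp only [Finset.mem_filter, Finset.mem_powerset] at hJ
    congr 1
    rw [Finset.card_image_of_injOn]
    intro a ha b hb hab
    obtain ⟨ha1, ha2⟩ := memW (hJ.1 ha)
    obtain ⟨hb1, hb2⟩ := memW (hJ.1 hb)
    rw [← (phiW_spec hM2 hM ha1 ha2).2, ← (phiW_spec hM2 hM hb1 hb2).2, hab]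

lemma subset_free0_iff (M N : ℕ) {A B : Finset (ℤ × ℤ)} (hA : A ⊆ V0 M N) :
    A ⊆ free0 M N B ↔ ∀ a ∈ A, ∀ b ∈ B, ¬ cylAdj M a b := by
  constructor
  · intro h a ha
    exact (Finset.mem_filter.mp (h ha)).2
  · intro h a ha
    exact Finset.mem_filter.mpr ⟨hA ha, h a ha⟩

lemma key_recursion (M N : ℕ) (hM2 : (M : ℤ) % 2 = 0) (hM : 2 ≤ M) :
    ∃ lam : ℤ, altZc M (N + 3) = lam * altZc M N := by
  classical
  refine ⟨∑ B ∈ (V1 M N).powerset, (if free0 M N B = ∅ then (-1 : ℤ) ^ B.card else 0), ?_⟩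
  have d3 : Disjoint (V2 M N) (WW M N) := Finset.disjoint_left.mpr (fun r h h' => by
    have := (Finset.mem_filter.mp h).2
    have := (Finset.mem_filter.mp h').2
    omega)
  have d2 : Disjoint (V0 M N) (V2 M N ∪ WW M N) := Finset.disjoint_left.mpr (fun r h h' => by
    have := (Finset.mem_filter.mp h).2
    rcases Finset.mem_union.mp h' with h' | h'
    · have := (Finset.mem_filter.mp h').2; omega
    · have := (Finset.mem_filter.mp h').2; omega)
  have d1 : Disjoint (V1 M N) (V0 M N ∪ (V2 M N ∪ WW M N)) :=
    Finset.disjoint_left.mpr (fun r h h' => by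
      have := (Finset.mem_filter.mp h).2
      rcases Finset.mem_union.mp h' with h' | h'
      · have := (Finset.mem_filter.mp h').2; omega
      rcases Finset.mem_union.mp h' with h' | h'
      · have := (Finset.mem_filter.mp h').2; omega
      · have := (Finset.mem_filter.mp h').2; omega)
  calc altZc M (N + 3)
      = ∑ I ∈ (rectR M (N + 3)).powerset, (if Ind M I then (-1 : ℤ) ^ I.card else 0) := by
        unfold altZc
        rw [Finset.sum_filter]
        exact Finset.sum_congr rfl (fun I _ => if_congr Iff.rfl rfl rfl)
    _ = ∑ B ∈ (V1 M N).powerset, ∑ A ∈ (V0 M N).powerset, ∑ C ∈ (V2 M N).powerset,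
          ∑ J ∈ (WW M N).powerset,
          (if Ind M (B ∪ (A ∪ (C ∪ J))) then (-1 : ℤ) ^ (B ∪ (A ∪ (C ∪ J))).card else 0) := by
        rw [partitionV M N, sum_powerset_union_disjoint d1]
        refine Finset.sum_congr rfl (fun B hB => ?_)
        rw [sum_powerset_union_disjoint d2]
        refine Finset.sum_congr rfl (fun A hA => ?_)
        rw [sum_powerset_union_disjoint d3]
    _ = ∑ B ∈ (V1 M N).powerset,
          (if free0 M N B = ∅ then (1 : ℤ) else 0) *
          (∑ C ∈ (V2 M N).powerset, ∑ J ∈ (WW M N).powerset,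
            (if ((∀ b ∈ B, ∀ c ∈ C, ¬ cylAdj M b c) ∧ (∀ c ∈ C, ∀ j ∈ J, ¬ cylAdj M c j)
                  ∧ Ind M J)
              then (-1 : ℤ) ^ (B.card + C.card + J.card) else 0)) := by
        refine Finset.sum_congr rfl (fun B hB => ?_)
        rw [Finset.mem_powerset] at hB
        have split : ∀ A ∈ (V0 M N).powerset, (∑ C ∈ (V2 M N).powerset,
            ∑ J ∈ (WW M N).powerset,
            (if Ind M (B ∪ (A ∪ (C ∪ J))) then (-1 : ℤ) ^ (B ∪ (A ∪ (C ∪ J))).card else 0))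
            = (if A ⊆ free0 M N B then (-1 : ℤ) ^ A.card else 0) *
              (∑ C ∈ (V2 M N).powerset, ∑ J ∈ (WW M N).powerset,
                (if ((∀ b ∈ B, ∀ c ∈ C, ¬ cylAdj M b c) ∧ (∀ c ∈ C, ∀ j ∈ J, ¬ cylAdj M c j)
                      ∧ Ind M J)
                  then (-1 : ℤ) ^ (B.card + C.card + J.card) else 0)) := by
          intro A hA
          rw [Finset.mem_powerset] at hA
          rw [Finset.mul_sum]
          refine Finset.sum_congr rfl (fun C hC => ?_)
          rw [Finset.mem_powerset] at hC
          rw [Finset.mul_sum]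
          refine Finset.sum_congr rfl (fun J hJ => ?_)
          rw [Finset.mem_powerset] at hJ
          have hiff : Ind M (B ∪ (A ∪ (C ∪ J))) ↔
              (A ⊆ free0 M N B ∧ ((∀ b ∈ B, ∀ c ∈ C, ¬ cylAdj M b c) ∧
                (∀ c ∈ C, ∀ j ∈ J, ¬ cylAdj M c j) ∧ Ind M J)) := by
            rw [ind_decomp M N hA hB hC hJ, subset_free0_iff M N (B := B) hA]
          rw [card_decomp M N hA hB hC hJ, if_congr hiff rfl rfl]
          by_cases h1 : A ⊆ free0 M N B <;>
            by_cases h2 : ((∀ b ∈ B, ∀ c ∈ C, ¬ cylAdj M b c) ∧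
              (∀ c ∈ C, ∀ j ∈ J, ¬ cylAdj M c j) ∧ Ind M J)
          · rw [if_pos ⟨h1, h2⟩, if_pos h1, if_pos h2,
              (by omega : B.card + (A.card + (C.card + J.card))
                = A.card + (B.card + C.card + J.card)), pow_add]
          · rw [if_neg (fun h => h2 h.2), if_pos h1, if_neg h2, mul_zero]
          · rw [if_neg (fun h => h1 h.1), if_neg h1, zero_mul]
          · rw [if_neg (fun h => h1 h.1), if_neg h1, zero_mul]
        rw [Finset.sum_congr rfl split, ← Finset.sum_mul]
        congr 1
        have hpows : (V0 M N).powerset.filter (fun A => A ⊆ free0 M N B)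
            = (free0 M N B).powerset := by
          ext A
          simp only [Finset.mem_filter, Finset.mem_powerset]
          exact ⟨fun h => h.2, fun h => ⟨h.trans (Finset.filter_subset _ _), h⟩⟩
        rw [← Finset.sum_filter, hpows, Finset.sum_powerset_neg_one_pow_card]
    _ = ∑ B ∈ (V1 M N).powerset,
          (if free0 M N B = ∅ then (-1 : ℤ) ^ B.card else 0) *
          (∑ J ∈ (WW M N).powerset, (if Ind M J then (-1 : ℤ) ^ J.card else 0)) := by
        refine Finset.sum_congr rfl (fun B hB => ?_)
        rw [Finset.mem_powerset] at hB
        by_cases hf : free0 M N B = ∅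
        · rw [if_pos hf, if_pos hf, one_mul]
          rw [Finset.sum_eq_single_of_mem ∅ (Finset.empty_mem_powerset _) ?zero]
          case zero =>
            intro C hC hne
            rw [Finset.mem_powerset] at hC
            obtain ⟨c, hc⟩ := Finset.nonempty_iff_ne_empty.mpr hne
            obtain ⟨b, hb, hadj⟩ := dom_transfer M N hM2 hM hB hf (hC hc)
            refine Finset.sum_eq_zero (fun J hJ => if_neg (fun h => ?_))
            exact h.1 b hb c hc hadj
          simp only [Finset.notMem_empty, Finset.card_empty, add_zero,
            false_implies, implies_true, true_and]
          rw [Finset.mul_sum]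
          refine Finset.sum_congr rfl (fun J hJ => ?_)
          by_cases hi : Ind M J
          · rw [if_pos hi, if_pos hi, pow_add]
          · rw [if_neg hi, if_neg hi, mul_zero]
        · rw [if_neg hf, if_neg hf, zero_mul, zero_mul]
    _ = (∑ B ∈ (V1 M N).powerset, (if free0 M N B = ∅ then (-1 : ℤ) ^ B.card else 0)) *
          altZc M N := by
        rw [← Finset.sum_mul, ZW_eq M N hM2 hM]

lemma altZc_one_eq_zero (M : ℕ) (hM : 1 ≤ M) : altZc M 1 = 0 := by
  unfold altZc
  rw [Finset.filter_true_of_mem, Finset.sum_powerset_neg_one_pow_card, if_neg]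
  · intro he
    have : ((0 : ℤ), (0 : ℤ)) ∈ rectR M 1 := by
      rw [mem_rectR]; simp; omega
    rw [he] at this
    exact absurd this (Finset.notMem_empty _)
  · intro I hI p hp q hq hadj
    simp only [Finset.mem_powerset] at hI
    have hp' := mem_rectR.mp (hI hp)
    have hq' := mem_rectR.mp (hI hq)
    have := cylAdj_level hadj
    push_cast at hp' hq'
    omega


/-- For `M` even, if `N ≡ 1 (mod 3)` then `Zᶜ_𝓡(M,N) = 0`. -/
theorem altZc_eq_zero (M N : ℕ) (hM : 1 ≤ M) (hN : 1 ≤ N) (hMe : Even M)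
    (h : N % 3 = 1) :
    altZc M N = 0 := by
  obtain ⟨m, hm⟩ := hMe
  have hM2 : (M : ℤ) % 2 = 0 := by omega
  have hMge : 2 ≤ M := by omega
  clear hm
  induction N using Nat.strong_induction_on with
  | _ N ih =>
    rcases (by omega : N = 1 ∨ 4 ≤ N) with h1 | h4
    · rw [h1]; exact altZc_one_eq_zero M hM
    · obtain ⟨K, rfl⟩ : ∃ K, N = K + 3 := ⟨N - 3, by omega⟩
      obtain ⟨lam, hl⟩ := key_recursion M K hM2 hMge
      rw [hl, ih K (by omega) (by omega) (by omega), mul_zero]
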